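/- Column subset selection bound: under the additive-multiplicative spectral bound with 0 < ε < 1/4, the Frobenius-norm error of projecting A onto the column span of C satisfies ‖A − C C⁺ A‖_F² ≤ (1 + 4ε) ‖A − A_k‖_F². -/

import Mathlib

open Matrix BigOperators Finset

noncomputable section

def frobSq {m n : Type*} [Fintype m] [Fintype n] (A : Matrix m n ℝ) : ℝ :=
  ∑ i, ∑ j, (A i j) ^ 2

def loewnerLE {n : Type*} [Fintype n] (M N : Matrix n n ℝ) : Prop :=
  (N - M).PosSemidef

/-!
Write `N = 1 - C C⁺` for the orthogonal projector killing the column span of `C` and `Q` for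
the orthogonal projector onto the row space of `A_k`, so that `trace Q ≤ k` and `A_k (1 - Q) = 0`.
Conjugating the lower spectral bound by `N` kills `C Cᵀ` and leaves
`(N A)(N A)ᵀ ⪯ ελ / (1 - ε) · I`. Split `‖N A‖² = ‖N A Q‖² + ‖N A (1 - Q)‖²`. The second
term is at most `‖A (1 - Q)‖² = ‖(A - A_k)(1 - Q)‖² ≤ ‖A - A_k‖²`. The first has rank at most
`k` and squared spectral norm at most `ελ / (1 - ε)`, so it is at most
`k ελ / (1 - ε) = ε / (1 - ε) ‖A - A_k‖²`, which is below `4ε ‖A - A_k‖²` for `ε < 3/4`.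
-/

open scoped MatrixOrder ComplexOrder

theorem Matrix.exists_isStarProjection_mul_eq_self_trace_eq_rank {𝕜 m n : Type*} [RCLike 𝕜]
    [Fintype m] [DecidableEq m] [Fintype n] [DecidableEq n] (X : Matrix m n 𝕜) :
    ∃ Q : Matrix n n 𝕜, IsStarProjection Q ∧ X * Q = X ∧ Q.trace = X.rank := by
  set K := LinearMap.range (toEuclideanLin Xᴴ)
  set Q : Matrix n n 𝕜 := (toEuclideanCLM (𝕜 := 𝕜) (n := n)).symm K.starProjection
  have hQ : toEuclideanLin Q = K.starProjection := by
    rw [← coe_toEuclideanCLM_eq_toEuclideanLin, StarAlgEquiv.apply_symm_apply]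
  have hQproj : IsStarProjection Q :=
    isStarProjection_starProjection.map (toEuclideanCLM (𝕜 := 𝕜) (n := n)).symm
  refine ⟨Q, hQproj, ?_, ?_⟩
  · suffices Q * Xᴴ = Xᴴ by
      have hQh : Qᴴ = Q := hQproj.isSelfAdjoint.star_eq
      simpa [hQh] using congrArg conjTranspose this
    apply toEuclideanLin.injective
    rw [toLpLin_mul 2 2 2, hQ]
    ext1 v
    exact K.starProjection_eq_self_iff.mpr (LinearMap.mem_range_self _ v)
  · have hK : LinearMap.IsProj K (K.starProjection : _ →ₗ[𝕜] _) :=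
      ⟨fun x => K.starProjection_apply_mem x, fun x hx => K.starProjection_eq_self_iff.mpr hx⟩
    rw [← rank_conjTranspose X, rank_eq_finrank_range_toLin Xᴴ (EuclideanSpace.basisFun n 𝕜).toBasis
      (EuclideanSpace.basisFun m 𝕜).toBasis, ← toEuclideanLin_eq_toLin_orthonormal, ← hK.trace,
      ← hQ, LinearMap.trace_eq_matrix_trace 𝕜 (EuclideanSpace.basisFun n 𝕜).toBasis,
      toEuclideanLin_eq_toLin_orthonormal, LinearMap.toMatrix_toLin]

theorem IsStarProjection.matrix_transpose_eq {n : Type*} [Fintype n] {Q : Matrix n n ℝ}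
    (hQ : IsStarProjection Q) : Qᵀ = Q :=
  (conjTranspose_eq_transpose_of_trivial Q).symm.trans hQ.isSelfAdjoint.star_eq

theorem mul_mul_transpose_of_isStarProjection {m n : Type*} [Fintype n] {Q : Matrix n n ℝ}
    (hQ : IsStarProjection Q) (X : Matrix m n ℝ) :
    (X * Q) * (X * Q)ᵀ = X * Q * Xᵀ := by
  rw [transpose_mul, hQ.matrix_transpose_eq, Matrix.mul_assoc, ← Matrix.mul_assoc Q,
    hQ.isIdempotentElem.eq, Matrix.mul_assoc]

theorem mul_transpose_eq_add_of_isStarProjection {m n : Type*} [Fintype n] [DecidableEq n]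
    {Q : Matrix n n ℝ} (hQ : IsStarProjection Q) (X : Matrix m n ℝ) :
    X * Xᵀ = (X * Q) * (X * Q)ᵀ + (X * (1 - Q)) * (X * (1 - Q))ᵀ := by
  rw [mul_mul_transpose_of_isStarProjection hQ, mul_mul_transpose_of_isStarProjection hQ.one_sub,
    ← Matrix.add_mul, ← Matrix.mul_add, add_sub_cancel, Matrix.mul_one]

theorem isStarProjection_mul_of_penrose {n m : Type*} [Fintype n] [Fintype m]
    {C : Matrix n m ℝ} {Cplus : Matrix m n ℝ} (hP1 : C * Cplus * C = C)
    (hP3 : (C * Cplus)ᵀ = C * Cplus) : IsStarProjection (C * Cplus) where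
  isIdempotentElem := by rw [IsIdempotentElem, ← Matrix.mul_assoc, hP1]
  isSelfAdjoint := (conjTranspose_eq_transpose_of_trivial _).trans hP3

theorem loewnerLE_iff_le {n : Type*} [Fintype n] {M N : Matrix n n ℝ} :
    loewnerLE M N ↔ M ≤ N :=
  Iff.rfl

section Frobenius

variable {m n : Type*} [Fintype m] [Fintype n]

theorem frobSq_eq_trace_transpose_mul (X : Matrix m n ℝ) : frobSq X = (Xᵀ * X).trace := by
  simp only [frobSq, trace, Matrix.diag, mul_apply, transpose_apply, sq]
  exact Finset.sum_comm

theorem frobSq_transpose (X : Matrix m n ℝ) : frobSq Xᵀ = frobSq X := by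
  simp only [frobSq, transpose_apply]
  exact Finset.sum_comm

theorem frobSq_eq_trace_mul_transpose (X : Matrix m n ℝ) : frobSq X = (X * Xᵀ).trace := by
  rw [← frobSq_transpose, frobSq_eq_trace_transpose_mul, transpose_transpose]

theorem frobSq_nonneg (X : Matrix m n ℝ) : 0 ≤ frobSq X :=
  Finset.sum_nonneg fun _ _ => Finset.sum_nonneg fun _ _ => sq_nonneg _

variable [DecidableEq n] {Q : Matrix n n ℝ}

theorem frobSq_eq_add_of_isStarProjection (hQ : IsStarProjection Q) (X : Matrix m n ℝ) :
    frobSq X = frobSq (X * Q) + frobSq (X * (1 - Q)) := by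
  simp only [frobSq_eq_trace_mul_transpose, ← trace_add,
    ← mul_transpose_eq_add_of_isStarProjection hQ]

theorem frobSq_mul_isStarProjection_le (hQ : IsStarProjection Q) (X : Matrix m n ℝ) :
    frobSq (X * Q) ≤ frobSq X := by
  linarith [frobSq_eq_add_of_isStarProjection hQ X, frobSq_nonneg (X * (1 - Q))]

theorem frobSq_isStarProjection_mul_le (hQ : IsStarProjection Q) (X : Matrix n m ℝ) :
    frobSq (Q * X) ≤ frobSq X := by
  rw [← frobSq_transpose, transpose_mul, hQ.matrix_transpose_eq, ← frobSq_transpose X]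
  exact frobSq_mul_isStarProjection_le hQ Xᵀ

theorem frobSq_mul_one_sub_le_frobSq_sub (hQ : IsStarProjection Q) {B : Matrix m n ℝ}
    (hBQ : B * Q = B) (X : Matrix m n ℝ) : frobSq (X * (1 - Q)) ≤ frobSq (X - B) := by
  have hB : B * (1 - Q) = 0 := by rw [Matrix.mul_sub, Matrix.mul_one, hBQ, sub_self]
  calc frobSq (X * (1 - Q)) = frobSq ((X - B) * (1 - Q)) := by rw [Matrix.sub_mul, hB, sub_zero]
    _ ≤ frobSq (X - B) := frobSq_mul_isStarProjection_le hQ.one_sub _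

end Frobenius

section Trace

variable {m n : Type*} [Fintype m] [Fintype n]

theorem trace_mul_nonneg_of_nonneg [DecidableEq n] {S T : Matrix n n ℝ} (hS : 0 ≤ S) (hT : 0 ≤ T) :
    0 ≤ (S * T).trace := by
  obtain ⟨B, rfl⟩ := CStarAlgebra.nonneg_iff_eq_star_mul_self.mp hS
  rw [Matrix.mul_assoc, trace_mul_comm]
  exact (hT.posSemidef.mul_mul_conjTranspose_same B).trace_nonneg

theorem trace_mul_self_le_of_le_smul_one [DecidableEq n] {S : Matrix n n ℝ} {c : ℝ} (hS : 0 ≤ S)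
    (hSc : S ≤ c • 1) : (S * S).trace ≤ c * S.trace := by
  have := trace_mul_nonneg_of_nonneg hS (sub_nonneg.mpr hSc)
  rw [Matrix.mul_sub, trace_sub, Matrix.mul_smul, Matrix.mul_one, trace_smul, smul_eq_mul] at this
  linarith

theorem sq_trace_mul_le (X : Matrix m n ℝ) (Y : Matrix n m ℝ) :
    (X * Y).trace ^ 2 ≤ (X * Xᵀ).trace * (Y * Yᵀ).trace := by
  have h := Finset.sum_mul_sq_le_sq_mul_sq Finset.univ
    (fun p : m × n => X p.1 p.2) (fun p : m × n => Y p.2 p.1)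
  have e : (Y * Yᵀ).trace = ∑ x : m, ∑ y : n, Y y x * Y y x := by
    simp only [trace, Matrix.diag, mul_apply, transpose_apply]
    exact Finset.sum_comm
  rw [e]
  simpa [trace, Matrix.diag, mul_apply, transpose_apply, sq, Fintype.sum_prod_type] using h

end Trace

theorem sq_frobSq_le_of_mul_eq_self {m n : Type*} [Fintype m] [Fintype n] [DecidableEq n]
    {Q : Matrix n n ℝ} (hQ : IsStarProjection Q) {G : Matrix m n ℝ} (hGQ : G * Q = G) :
    frobSq G ^ 2 ≤ ((G * Gᵀ) * (G * Gᵀ)).trace * Q.trace := by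
  have hM : (Gᵀ * G) * Q = Gᵀ * G := by rw [Matrix.mul_assoc, hGQ]
  have hMM : ((Gᵀ * G) * (Gᵀ * G)ᵀ).trace = ((G * Gᵀ) * (G * Gᵀ)).trace := by
    rw [transpose_mul, transpose_transpose, Matrix.mul_assoc, trace_mul_comm]
    simp only [Matrix.mul_assoc]
  have hQQ : Q * Qᵀ = Q := by rw [hQ.matrix_transpose_eq, hQ.isIdempotentElem.eq]
  calc frobSq G ^ 2 = ((Gᵀ * G) * Q).trace ^ 2 := by rw [hM, frobSq_eq_trace_transpose_mul]
    _ ≤ ((Gᵀ * G) * (Gᵀ * G)ᵀ).trace * (Q * Qᵀ).trace := sq_trace_mul_le _ _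
    _ = ((G * Gᵀ) * (G * Gᵀ)).trace * Q.trace := by rw [hMM, hQQ]

theorem frobSq_mul_le_mul_trace {m n : Type*} [Fintype m] [DecidableEq m] [Fintype n]
    [DecidableEq n] {Q : Matrix n n ℝ} (hQ : IsStarProjection Q) {X : Matrix m n ℝ} {c : ℝ}
    (hc : 0 ≤ c) (hX : X * Xᵀ ≤ c • 1) : frobSq (X * Q) ≤ c * Q.trace := by
  set G := X * Q
  have hGG : G * Gᵀ ≤ c • 1 := by
    refine le_trans ?_ hX
    rw [mul_transpose_eq_add_of_isStarProjection hQ X]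
    exact le_add_of_nonneg_right (posSemidef_self_mul_conjTranspose _).nonneg
  have hGQ : G * Q = G := by rw [Matrix.mul_assoc, hQ.isIdempotentElem.eq]
  have htrace : ((G * Gᵀ) * (G * Gᵀ)).trace ≤ c * frobSq G := by
    rw [frobSq_eq_trace_mul_transpose]
    exact trace_mul_self_le_of_le_smul_one (posSemidef_self_mul_conjTranspose G).nonneg hGG
  have hQ0 : 0 ≤ Q.trace := hQ.nonneg.posSemidef.trace_nonneg
  have hG0 := frobSq_nonneg G
  nlinarith [sq_frobSq_le_of_mul_eq_self hQ hGQ, mul_nonneg hc hQ0]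

theorem mul_transpose_le_smul_one_of_loewnerLE {n m d : Type*} [Fintype n] [DecidableEq n]
    [Fintype m] [Fintype d] {A : Matrix n d ℝ} {C : Matrix n m ℝ} {N : Matrix n n ℝ}
    (hN : IsStarProjection N) (hNC : N * C = 0) {ε δ : ℝ} (hε : ε < 1) (hδ : 0 ≤ δ)
    (h : loewnerLE ((1 - ε) • (A * Aᵀ) - δ • 1) (C * Cᵀ)) :
    (N * A) * (N * A)ᵀ ≤ (δ / (1 - ε)) • 1 := by
  have hconj := hN.isSelfAdjoint.conjugate_le_conjugate (loewnerLE_iff_le.mp h)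
  have hlhs : N * ((1 - ε) • (A * Aᵀ) - δ • 1) * N = (1 - ε) • ((N * A) * (N * A)ᵀ) - δ • N := by
    rw [transpose_mul, hN.matrix_transpose_eq, Matrix.mul_sub, Matrix.sub_mul, Matrix.mul_smul,
      Matrix.smul_mul, Matrix.mul_smul, Matrix.smul_mul, Matrix.mul_one, hN.isIdempotentElem.eq]
    simp only [Matrix.mul_assoc]
  have hrhs : N * (C * Cᵀ) * N = 0 := by
    rw [← Matrix.mul_assoc, hNC, Matrix.zero_mul, Matrix.zero_mul]
  rw [hlhs, hrhs, sub_nonpos] at hconj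
  have hscaled : (1 - ε) • ((N * A) * (N * A)ᵀ) ≤ δ • 1 :=
    hconj.trans (smul_le_smul_of_nonneg_left hN.le_one hδ)
  have h1ε : 0 < 1 - ε := sub_pos.mpr hε
  calc (N * A) * (N * A)ᵀ = (1 - ε)⁻¹ • ((1 - ε) • ((N * A) * (N * A)ᵀ)) := by
        rw [smul_smul, inv_mul_cancel₀ h1ε.ne', one_smul]
    _ ≤ (1 - ε)⁻¹ • (δ • 1) := smul_le_smul_of_nonneg_left hscaled (inv_nonneg.mpr h1ε.le)
    _ = (δ / (1 - ε)) • 1 := by rw [smul_smul, inv_mul_eq_div]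

theorem drls_column_subset_selection_general {n d k m : ℕ} (hk : 1 ≤ k)
    (A Ak : Matrix (Fin n) (Fin d) ℝ) (S : Matrix (Fin d) (Fin m) ℝ)
    (hAk_rank : Ak.rank ≤ k)
    (lam : ℝ) (hlam : lam = 1 / (k : ℝ) * frobSq (A - Ak))
    (ε : ℝ) (hε0 : 0 < ε) (hε1 : ε < 1 / 4)
    (hspecL : loewnerLE ((1 - ε) • (A * Aᵀ) - (ε * lam) • 1) ((A * S) * (A * S)ᵀ))
    -- `Cplus` is the Moore-Penrose pseudoinverse of `C = A S`
    (Cplus : Matrix (Fin m) (Fin n) ℝ)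
    (hP1 : (A * S) * Cplus * (A * S) = A * S)
    (hP3 : ((A * S) * Cplus)ᵀ = (A * S) * Cplus) :
    frobSq (A - (A * S) * Cplus * A) ≤ (1 + 4 * ε) * frobSq (A - Ak) := by
  set C := A * S
  set N := 1 - C * Cplus
  set F := frobSq (A - Ak)
  have hk0 : (0 : ℝ) < k := by exact_mod_cast hk
  have hF0 : 0 ≤ F := frobSq_nonneg _
  have hlamk : lam * k = F := by rw [hlam]; field_simp
  have hlam0 : 0 ≤ lam := by rw [hlam]; exact mul_nonneg (by positivity) hF0
  have hc0 : 0 ≤ ε * lam / (1 - ε) := div_nonneg (by positivity) (by linarith)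
  have hN : IsStarProjection N := (isStarProjection_mul_of_penrose hP1 hP3).one_sub
  have hNC : N * C = 0 := by rw [Matrix.sub_mul, Matrix.one_mul, hP1, sub_self]
  have hNA : (N * A) * (N * A)ᵀ ≤ (ε * lam / (1 - ε)) • 1 :=
    mul_transpose_le_smul_one_of_loewnerLE hN hNC (by linarith) (by positivity) hspecL
  obtain ⟨Q, hQ, hAkQ, hQtr⟩ := Ak.exists_isStarProjection_mul_eq_self_trace_eq_rank
  have hhead : frobSq (N * A * Q) ≤ ε * lam / (1 - ε) * k := by
    refine (frobSq_mul_le_mul_trace hQ hc0 hNA).trans (mul_le_mul_of_nonneg_left ?_ hc0)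
    rw [hQtr]
    exact_mod_cast hAk_rank
  have htail : frobSq (N * A * (1 - Q)) ≤ F := by
    rw [Matrix.mul_assoc]
    exact (frobSq_isStarProjection_mul_le hN _).trans (frobSq_mul_one_sub_le_frobSq_sub hQ hAkQ A)
  have hratio : ε * lam / (1 - ε) * k ≤ 4 * ε * F := by
    rw [div_mul_eq_mul_div, div_le_iff₀ (by linarith), mul_assoc, hlamk]
    nlinarith [mul_nonneg (mul_nonneg hε0.le hF0) (by linarith : 0 ≤ 3 - 4 * ε)]
  rw [show A - C * Cplus * A = N * A by rw [Matrix.sub_mul, Matrix.one_mul],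
    frobSq_eq_add_of_isStarProjection hQ]
  linarith

/-- Column subset selection bound: under the additive-multiplicative spectral bound with
`0 < ε < 1/4`, the Frobenius-norm error of projecting `A` onto the column span of `C = A S`
satisfies `‖A - C C⁺ A‖_F² ≤ (1 + 4ε) ‖A - A_k‖_F²`. -/
theorem drls_column_subset_selection {n d k m : ℕ} (hk : 1 ≤ k)
    (A Ak : Matrix (Fin n) (Fin d) ℝ) (S : Matrix (Fin d) (Fin m) ℝ)
    (h01 : ∀ i j, S i j = 0 ∨ S i j = 1)
    (hrow : ∀ i j j', S i j = 1 → S i j' = 1 → j = j')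
    (hcol : ∀ i i' j, S i j = 1 → S i' j = 1 → i = i')
    (hrank : k ≤ A.rank)
    (hAk_rank : Ak.rank ≤ k)
    (hAk_opt : ∀ B : Matrix (Fin n) (Fin d) ℝ, B.rank ≤ k →
      frobSq (A - Ak) ≤ frobSq (A - B))
    (lam : ℝ) (hlam : lam = 1 / (k : ℝ) * frobSq (A - Ak))
    -- top-`k` singular triplets of `A`, and the assumption `λ ≤ σ_k²`
    (Uk : Matrix (Fin n) (Fin k) ℝ) (Vk : Matrix (Fin d) (Fin k) ℝ) (σ : Fin k → ℝ)
    (hUk : Ukᵀ * Uk = 1) (hVk : Vkᵀ * Vk = 1)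
    (hsvd : A * Vk = Uk * Matrix.diagonal σ)
    (hσ_sorted : ∀ i j : Fin k, i ≤ j → σ j ≤ σ i)
    (hσ_pos : ∀ i, 0 < σ i)
    (hlam_le : ∀ i, lam ≤ (σ i) ^ 2)
    (ε : ℝ) (hε0 : 0 < ε) (hε1 : ε < 1 / 4)
    (hspecL : loewnerLE ((1 - ε) • (A * Aᵀ) - (ε * lam) • 1) ((A * S) * (A * S)ᵀ))
    (hspecR : loewnerLE ((A * S) * (A * S)ᵀ) (A * Aᵀ))
    -- `Cplus` is the Moore-Penrose pseudoinverse of `C = A S`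
    (Cplus : Matrix (Fin m) (Fin n) ℝ)
    (hP1 : (A * S) * Cplus * (A * S) = A * S)
    (hP2 : Cplus * (A * S) * Cplus = Cplus)
    (hP3 : ((A * S) * Cplus)ᵀ = (A * S) * Cplus)
    (hP4 : (Cplus * (A * S))ᵀ = Cplus * (A * S)) :
    frobSq (A - (A * S) * Cplus * A) ≤ (1 + 4 * ε) * frobSq (A - Ak) :=
  drls_column_subset_selection_general hk A Ak S hAk_rank lam hlam ε hε0 hε1 hspecL Cplus hP1 hP3
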